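/- arXiv:1602.08631 — 4 statements merged into one kernel-verified Lean document; each statement's English description precedes it below -/
import Mathlib

section
/- If L = v1 v2 ... vn is a local median order of a digraph D (i.e., for all i ≤ j, the out-degree of v_i in the subdigraph induced by {v_i,...,v_j} is at least its in-degree there, and the in-degree of v_j in that subdigraph is at least its out-degree there), and e = (v_j, v_i) is an arc of D with i < j, then L is also a local median order of the digraph D' obtained from D by reversing the orientation of e. -/
open scoped Classical

variable {V : Type*}

noncomputable def outDegOn (E : V → V → Prop) (A : Finset V) (x : V) : ℕ :=
  (A.filter fun y => E x y).card

noncomputable def inDegOn (E : V → V → Prop) (A : Finset V) (x : V) : ℕ :=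
  (A.filter fun y => E y x).card

noncomputable def interval [DecidableEq V] {n : ℕ} (L : Fin n → V) (i j : Fin n) : Finset V :=
  (Finset.univ.filter fun k : Fin n => i ≤ k ∧ k ≤ j).image L

/-- The feedback property of an ordering `L` of the vertices of the digraph `E`. -/
def Feedback [DecidableEq V] {n : ℕ} (E : V → V → Prop) (L : Fin n → V) : Prop :=
  ∀ i j : Fin n, i ≤ j →
    inDegOn E (interval L i j) (L i) ≤ outDegOn E (interval L i j) (L i) ∧
    outDegOn E (interval L i j) (L j) ≤ inDegOn E (interval L i j) (L j)

set_option maxHeartbeats 1600000 in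
/-- Reversing a backward arc of a local median order preserves the feedback property. -/
theorem reverse_backward_arc_preserves_feedback [DecidableEq V]
    (E E' : V → V → Prop) (hloop : ∀ x, ¬ E x x) {n : ℕ} (L : Fin n ≃ V)
    (hL : Feedback E ⇑L) (i j : Fin n) (hij : i < j) (he : E (L j) (L i))
    (hE' : ∀ x y, E' x y ↔ ((E x y ∧ ¬(x = L j ∧ y = L i)) ∨ (x = L i ∧ y = L j))) :
    Feedback E' ⇑L := by
  have hne : L i ≠ L j := fun h => (Fin.ne_of_lt hij) (L.injective h)
  have mono : ∀ (p q : V → Prop) (s : Finset V), (∀ y ∈ s, p y → q y) →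
      (s.filter p).card ≤ (s.filter q).card := by
    intro p q s h
    apply Finset.card_le_card
    intro y hy
    simp only [Finset.mem_filter] at hy ⊢
    exact ⟨hy.1, h y hy.1 hy.2⟩
  intro a b hab
  obtain ⟨h1, h2⟩ := hL a b hab
  set A := interval (⇑L) a b with hA
  have hmem : ∀ k : Fin n, L k ∈ A ↔ a ≤ k ∧ k ≤ b := by
    intro k
    simp [hA, interval]
  constructor
  · by_cases hai : L a = L i
    · calc inDegOn E' A (L a) ≤ inDegOn E A (L a) := by
            apply mono
            intro y hy h
            rcases (hE' y (L a)).1 h with ⟨h3, _⟩ | ⟨h3, h4⟩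
            · exact h3
            · exact absurd (hai.symm.trans h4) hne
        _ ≤ outDegOn E A (L a) := h1
        _ ≤ outDegOn E' A (L a) := by
            apply mono
            intro y hy h
            exact (hE' (L a) y).2 (Or.inl ⟨h, fun ⟨p, _⟩ => hne (hai.symm.trans p)⟩)
    · have hin : inDegOn E' A (L a) = inDegOn E A (L a) := by
        unfold inDegOn
        congr 1
        apply Finset.filter_congr
        intro y hy
        rw [hE']
        by_cases haj : L a = L j
        · have hLi : L i ∉ A := by
            intro hm
            have := ((hmem i).1 hm).1
            have ha : a = j := L.injective haj
            omega
          have hyne : y ≠ L i := fun h => hLi (h ▸ hy)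
          tauto
        · tauto
      have hout : outDegOn E' A (L a) = outDegOn E A (L a) := by
        unfold outDegOn
        congr 1
        apply Finset.filter_congr
        intro y hy
        rw [hE']
        by_cases haj : L a = L j
        · have hLi : L i ∉ A := by
            intro hm
            have := ((hmem i).1 hm).1
            have ha : a = j := L.injective haj
            omega
          have hyne : y ≠ L i := fun h => hLi (h ▸ hy)
          tauto
        · tauto
      rw [hin, hout]; exact h1
  · by_cases hbj : L b = L j
    · calc outDegOn E' A (L b) ≤ outDegOn E A (L b) := by
            apply mono
            intro y hy h
            rcases (hE' (L b) y).1 h with ⟨h3, _⟩ | ⟨h3, h4⟩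
            · exact h3
            · exact absurd (h3.symm.trans hbj) hne
        _ ≤ inDegOn E A (L b) := h2
        _ ≤ inDegOn E' A (L b) := by
            apply mono
            intro y hy h
            exact (hE' y (L b)).2 (Or.inl ⟨h, fun ⟨_, p⟩ => hne (p.symm.trans hbj)⟩)
    · have hout : outDegOn E' A (L b) = outDegOn E A (L b) := by
        unfold outDegOn
        congr 1
        apply Finset.filter_congr
        intro y hy
        rw [hE']
        by_cases hbi : L b = L i
        · have hLj : L j ∉ A := by
            intro hm
            have := ((hmem j).1 hm).2
            have hb : b = i := L.injective hbi
            omega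
          have hyne : y ≠ L j := fun h => hLj (h ▸ hy)
          tauto
        · tauto
      have hin : inDegOn E' A (L b) = inDegOn E A (L b) := by
        unfold inDegOn
        congr 1
        apply Finset.filter_congr
        intro y hy
        rw [hE']
        by_cases hbi : L b = L i
        · have hLj : L j ∉ A := by
            intro hm
            have := ((hmem j).1 hm).2
            have hb : b = i := L.injective hbi
            omega
          have hyne : y ≠ L j := fun h => hLj (h ▸ hy)
          tauto
        · tauto
      rw [hin, hout]; exact h2
end

section
/- A graph G is a threshold graph if and only if G contains no induced subgraph isomorphic to C_4, the complement of C_4, or P_4. -/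
/-- The cycle graph on `n` vertices. -/
def cycleGraph (n : ℕ) : SimpleGraph (Fin n) :=
  SimpleGraph.fromRel (fun x y => (x.val + 1) % n = y.val)

/-- The chair: vertices `0,1,2,3,4` with exactly the edges `01, 12, 23, 24`. -/
def chairGraph : SimpleGraph (Fin 5) :=
  SimpleGraph.fromRel (fun x y =>
    (x = 0 ∧ y = 1) ∨ (x = 1 ∧ y = 2) ∨ (x = 2 ∧ y = 3) ∨ (x = 2 ∧ y = 4))

/-- A comb: no induced `C₄`, co-`C₄`, `C₅`, chair or co-chair. -/
def IsComb {W : Type*} (G : SimpleGraph W) : Prop :=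
  IsEmpty (cycleGraph 4 ↪g G) ∧ IsEmpty ((cycleGraph 4)ᶜ ↪g G) ∧
  IsEmpty (cycleGraph 5 ↪g G) ∧ IsEmpty (chairGraph ↪g G) ∧
  IsEmpty (chairGraphᶜ ↪g G)

/-- A threshold graph: no induced `C₄`, co-`C₄` or `P₄`. -/
def IsThresholdGraph {W : Type*} (G : SimpleGraph W) : Prop :=
  IsEmpty (cycleGraph 4 ↪g G) ∧ IsEmpty ((cycleGraph 4)ᶜ ↪g G) ∧
  IsEmpty (SimpleGraph.pathGraph 4 ↪g G)

lemma cycleGraph_adj {n : ℕ} (x y : Fin n) :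
    (cycleGraph n).Adj x y ↔ x ≠ y ∧ ((x.val + 1) % n = y.val ∨ (y.val + 1) % n = x.val) := by
  simp [cycleGraph, SimpleGraph.fromRel_adj]

instance {n : ℕ} : DecidableRel (cycleGraph n).Adj := fun x y =>
  decidable_of_iff' _ (cycleGraph_adj x y)

instance {n : ℕ} : DecidableRel (SimpleGraph.pathGraph n).Adj := fun _ _ =>
  decidable_of_iff' _ SimpleGraph.pathGraph_adj

/-- Build an embedding of a graph on `Fin 4` from four suitable vertices. -/
def emb4 {V : Type*} (G : SimpleGraph V) (H : SimpleGraph (Fin 4)) (w x y z : V)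
    (hinj : Function.Injective ![w, x, y, z])
    (hadj : ∀ i j : Fin 4, H.Adj i j → G.Adj (![w, x, y, z] i) (![w, x, y, z] j))
    (hnadj : ∀ i j : Fin 4, i ≠ j → ¬H.Adj i j → ¬G.Adj (![w, x, y, z] i) (![w, x, y, z] j)) :
    H ↪g G :=
  { toFun := ![w, x, y, z]
    inj' := hinj
    map_rel_iff' := by
      intro i j
      constructor
      · intro hg
        by_contra hn
        exact hnadj i j (fun hij => G.irrefl (hij ▸ hg)) hn hg
      · exact hadj i j }

lemma inj4 {V : Type*} {w x y z : V} (h1 : w ≠ x) (h2 : w ≠ y) (h3 : w ≠ z)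
    (h4 : x ≠ y) (h5 : x ≠ z) (h6 : y ≠ z) : Function.Injective ![w, x, y, z] := by
  intro i j hij
  fin_cases i <;> fin_cases j <;> simp_all

lemma nested {V : Type*} {G : SimpleGraph V} (h : IsThresholdGraph G) (u v : V) (huv : u ≠ v) :
    (∀ w, w ≠ v → G.Adj u w → G.Adj v w) ∨ (∀ w, w ≠ u → G.Adj v w → G.Adj u w) := by
  by_contra hc
  push_neg at hc
  obtain ⟨⟨a, hav, hua, hva⟩, ⟨b, hbu, hvb, hub⟩⟩ := hc
  have hau := hua.symm
  have hbv := hvb.symm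
  have hvu := huv.symm
  have hab : a ≠ b := fun hh => hub (hh ▸ hua)
  have hba := hab.symm
  have hanu : a ≠ u := hua.ne'
  have hbnv : b ≠ v := hvb.ne'
  have hav' : ¬ G.Adj a v := fun hh => hva hh.symm
  have hbu' : ¬ G.Adj b u := fun hh => hub hh.symm
  by_cases h1 : G.Adj u v <;> by_cases h2 : G.Adj a b
  · -- C4 : a-u-v-b-a
    have h1' := h1.symm
    have h2' := h2.symm
    refine h.1.false (emb4 G _ a u v b (inj4 hanu hav hab huv hbu.symm hbnv.symm) ?_ ?_)
    · intro i j hij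
      fin_cases i <;> fin_cases j <;> first | exact absurd hij (by decide) | assumption
    · intro i j hne hij
      fin_cases i <;> fin_cases j <;>
        first | exact absurd rfl hne | exact absurd (by decide) hij | assumption
  · -- P4 : a-u-v-b
    have h1' := h1.symm
    have h2' : ¬ G.Adj b a := fun hh => h2 hh.symm
    refine h.2.2.false (emb4 G _ a u v b (inj4 hanu hav hab huv hbu.symm hbnv.symm) ?_ ?_)
    · intro i j hij
      fin_cases i <;> fin_cases j <;> first | exact absurd hij (by decide) | assumption
    · intro i j hne hij
      fin_cases i <;> fin_cases j <;>
        first | exact absurd rfl hne | exact absurd (by decide) hij | assumption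
  · -- P4 : u-a-b-v
    have h1' : ¬ G.Adj v u := fun hh => h1 hh.symm
    have h2' := h2.symm
    have hub2 : u ≠ b := hbu.symm
    refine h.2.2.false (emb4 G _ u a b v (inj4 hanu.symm hbu.symm huv hab hav hbnv) ?_ ?_)
    · intro i j hij
      fin_cases i <;> fin_cases j <;> first | exact absurd hij (by decide) | assumption
    · intro i j hne hij
      fin_cases i <;> fin_cases j <;>
        first | exact absurd rfl hne | exact absurd (by decide) hij | assumption
  · -- 2K2 = co-C4 : edges u-a, v-b ; co-C4 has edges 02 and 13
    have h1' : ¬ G.Adj v u := fun hh => h1 hh.symm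
    have h2' : ¬ G.Adj b a := fun hh => h2 hh.symm
    refine h.2.1.false (emb4 G _ u v a b (inj4 huv hanu.symm hbu.symm hav.symm hbnv.symm hab) ?_ ?_)
    · intro i j hij
      fin_cases i <;> fin_cases j <;> first | exact absurd hij (by decide) | assumption
    · intro i j hne hij
      fin_cases i <;> fin_cases j <;>
        first | exact absurd rfl hne | exact absurd (by decide) hij | assumption

/-- forward: an elimination ordering forbids any 4-vertex graph all of whose
vertices have both a neighbour and a non-neighbour. -/
lemma no_emb_of_order {V : Type*} [Fintype V] [DecidableEq V] (G : SimpleGraph V)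
    (e : Fin (Fintype.card V) ≃ V)
    (he : ∀ i, (∀ j, j < i → ¬ G.Adj (e i) (e j)) ∨ (∀ j, j < i → G.Adj (e i) (e j)))
    (H : SimpleGraph (Fin 4))
    (hH : ∀ v : Fin 4, (∃ a, H.Adj v a) ∧ ∃ b, b ≠ v ∧ ¬H.Adj v b) :
    IsEmpty (H ↪g G) := by
  constructor
  intro f
  obtain ⟨k, -, hk⟩ := Finset.exists_max_image Finset.univ
    (fun x : Fin 4 => e.symm (f x)) ⟨0, Finset.mem_univ 0⟩
  obtain ⟨⟨a, ha⟩, ⟨b, hbk, hbn⟩⟩ := hH k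
  have hlt : ∀ x, x ≠ k → e.symm (f x) < e.symm (f k) := fun x hx =>
    lt_of_le_of_ne (hk x (Finset.mem_univ x))
      (fun hh => hx (f.injective (e.symm.injective hh)))
  rcases he (e.symm (f k)) with hcase | hcase
  · refine hcase _ (hlt a ha.ne') ?_
    rw [Equiv.apply_symm_apply, Equiv.apply_symm_apply]
    exact f.map_rel_iff.mpr ha
  · have := hcase _ (hlt b hbk)
    rw [Equiv.apply_symm_apply, Equiv.apply_symm_apply] at this
    exact hbn (f.map_rel_iff.mp this)

lemma exists_max {α : Type*} [Fintype α] [DecidableEq α] [Nonempty α] (r : α → α → Prop)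
    (htot : ∀ a b, r a b ∨ r b a)
    (htrans : ∀ a b c, r a b → r b c → r a c) : ∃ m, ∀ a, r a m := by
  have key : ∀ s : Finset α, s.Nonempty → ∃ m ∈ s, ∀ a ∈ s, r a m := by
    intro s
    induction s using Finset.induction_on with
    | empty => intro h; exact absurd h (by simp)
    | @insert x s hx ih =>
      intro _
      rcases s.eq_empty_or_nonempty with rfl | hs
      · refine ⟨x, by simp, ?_⟩
        intro a ha
        simp only [Finset.mem_insert, Finset.notMem_empty, or_false] at ha
        subst ha
        rcases htot a a with h' | h' <;> exact h'
      · obtain ⟨m, hms, hm⟩ := ih hs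
        rcases htot x m with h' | h'
        · refine ⟨m, Finset.mem_insert_of_mem hms, ?_⟩
          intro a ha
          rcases Finset.mem_insert.mp ha with rfl | ha
          · exact h'
          · exact hm a ha
        · refine ⟨x, Finset.mem_insert_self _ _, ?_⟩
          intro a ha
          rcases Finset.mem_insert.mp ha with rfl | ha
          · rcases htot a a with h'' | h'' <;> exact h''
          · exact htrans a m x (hm a ha) h'
  obtain ⟨m, -, hm⟩ := key Finset.univ Finset.univ_nonempty
  exact ⟨m, fun a => hm a (Finset.mem_univ a)⟩


lemma exists_extremal {V : Type*} [Fintype V] [DecidableEq V] [Nonempty V]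
    (G : SimpleGraph V) (h : IsThresholdGraph G) :
    ∃ v, (∀ u, u ≠ v → G.Adj v u) ∨ (∀ u, ¬ G.Adj v u) := by
  have htot : ∀ a b : V, (∀ w, w ≠ b → G.Adj a w → G.Adj b w) ∨
      (∀ w, w ≠ a → G.Adj b w → G.Adj a w) := by
    intro a b
    rcases eq_or_ne a b with rfl | hab
    · exact Or.inl fun w _ hw => hw
    · exact nested h a b hab
  have htrans : ∀ a b c : V, (∀ w, w ≠ b → G.Adj a w → G.Adj b w) →
      (∀ w, w ≠ c → G.Adj b w → G.Adj c w) →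
      (∀ w, w ≠ c → G.Adj a w → G.Adj c w) := by
    intro a b c hab hbc w hwc haw
    by_cases hwb : w = b
    · subst hwb
      by_cases hac : a = c
      · exact hac ▸ haw
      · have h1 : G.Adj c a := hbc a hac haw.symm
        have h2 : G.Adj w c := hab c (Ne.symm hwc) h1.symm
        exact h2.symm
    · exact hbc w hwc (hab w hwb haw)
  obtain ⟨m, hm⟩ := exists_max (fun a b => ∀ w, w ≠ b → G.Adj a w → G.Adj b w) htot htrans
  by_cases hd : ∀ u, u ≠ m → G.Adj m u
  · exact ⟨m, Or.inl hd⟩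
  · push_neg at hd
    obtain ⟨u, hum, hmu⟩ := hd
    refine ⟨u, Or.inr ?_⟩
    intro w hw
    have hwm : w ≠ m := fun hh => hmu (hh ▸ hw).symm
    exact hmu (hm w u hum hw.symm)

lemma threshold_induce {V : Type*} {G : SimpleGraph V} (h : IsThresholdGraph G) (s : Set V) :
    IsThresholdGraph (G.induce s) :=
  ⟨⟨fun f => h.1.false ((SimpleGraph.Embedding.induce s).comp f)⟩,
   ⟨fun f => h.2.1.false ((SimpleGraph.Embedding.induce s).comp f)⟩,
   ⟨fun f => h.2.2.false ((SimpleGraph.Embedding.induce s).comp f)⟩⟩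

lemma build : ∀ (n : ℕ) {V : Type*} [Fintype V] [DecidableEq V] (G : SimpleGraph V),
    Fintype.card V = n → IsThresholdGraph G →
    ∃ e : Fin (Fintype.card V) ≃ V, ∀ i : Fin (Fintype.card V),
      (∀ j, j < i → ¬ G.Adj (e i) (e j)) ∨ (∀ j, j < i → G.Adj (e i) (e j)) := by
  intro n
  induction n with
  | zero =>
    intro V _ _ G hcard _
    refine ⟨(Fintype.equivFin V).symm, fun i => ?_⟩
    exact absurd i.isLt (by omega)
  | succ n ih =>
    intro V _ _ G hcard hG
    have hne : Nonempty V := Fintype.card_pos_iff.mp (by omega)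
    obtain ⟨v, hv⟩ := exists_extremal G hG
    set s : Set V := {x | x ≠ v} with hs
    have hG' : IsThresholdGraph (G.induce s) := threshold_induce hG s
    have hcard' : Fintype.card s = n := by
      have : Fintype.card s = Fintype.card V - 1 := by
        exact Set.card_ne_eq v
      omega
    obtain ⟨e', he'⟩ := ih (G.induce s) hcard' hG'
    -- e'' : Fin n ≃ s
    let e'' : Fin n ≃ s := (finCongr hcard'.symm).trans e'
    let f : Fin (Fintype.card V) → V := fun i =>
      if h : (i : ℕ) < n then (e'' ⟨i, h⟩ : V) else v
    have hfv : ∀ (i : Fin (Fintype.card V)) (h : (i : ℕ) < n), f i = (e'' ⟨i, h⟩ : V) :=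
      fun i h => dif_pos h
    have hfv' : ∀ (i : Fin (Fintype.card V)) (h : ¬ (i : ℕ) < n), f i = v :=
      fun i h => dif_neg h
    have hinj : Function.Injective f := by
      intro i j hij
      by_cases hi : (i : ℕ) < n <;> by_cases hj : (j : ℕ) < n
      · rw [hfv i hi, hfv j hj] at hij
        have h2 := e''.injective (Subtype.ext hij)
        have h3 : (i : ℕ) = (j : ℕ) := by
          have := congrArg Fin.val h2; simpa using this
        exact Fin.ext h3
      · rw [hfv i hi, hfv' j hj] at hij
        exact absurd hij (e'' ⟨i, hi⟩).2
      · rw [hfv' i hi, hfv j hj] at hij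
        exact absurd hij.symm (e'' ⟨j, hj⟩).2
      · have hi' := i.isLt; have hj' := j.isLt
        exact Fin.ext (by omega)
    have hbij : Function.Bijective f :=
      (Fintype.bijective_iff_injective_and_card f).mpr ⟨hinj, by simp⟩
    refine ⟨Equiv.ofBijective f hbij, ?_⟩
    intro i
    have heval : ∀ k, Equiv.ofBijective f hbij k = f k := fun _ => rfl
    by_cases hi : (i : ℕ) < n
    · -- use he' at the corresponding index
      set i' : Fin (Fintype.card s) := finCongr hcard'.symm ⟨(i : ℕ), hi⟩ with hi'def
      have key : ∀ (j : Fin (Fintype.card V)) (hj : j < i),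
          (G.induce s).Adj (e' i') (e' (finCongr hcard'.symm ⟨(j : ℕ), by omega⟩)) ↔
          G.Adj (Equiv.ofBijective f hbij i) (Equiv.ofBijective f hbij j) := by
        intro j hj
        have hjn : (j : ℕ) < n := by
          have := Fin.lt_def.mp hj; omega
        rw [heval, heval, hfv i hi, hfv j hjn]
        exact Iff.rfl
      rcases he' i' with hc | hc
      · left
        intro j hj
        have hjn : (j : ℕ) < n := by
          have := Fin.lt_def.mp hj; omega
        rw [← key j hj]
        exact hc _ (Fin.lt_def.mpr (Fin.lt_def.mp hj))
      · right
        intro j hj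
        rw [← key j hj]
        exact hc _ (Fin.lt_def.mpr (Fin.lt_def.mp hj))
    · -- i is the last position; e i = v
      have hiv : Equiv.ofBijective f hbij i = v := hfv' i hi
      rcases hv with hv | hv
      · right
        intro j hj
        have hjn : (j : ℕ) < n := by
          have h1 := Fin.lt_def.mp hj; have h2 := i.isLt; omega
        rw [hiv, heval, hfv j hjn]
        exact hv _ (e'' ⟨j, hjn⟩).2
      · left
        intro j hj
        rw [hiv]
        exact hv _

/-- A graph is a threshold graph (constructible by repeatedly adding an isolated or a
dominating vertex) iff it has no induced `C₄`, co-`C₄` or `P₄`. -/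
theorem threshold_iff_forbidden {V : Type*} [Fintype V] [DecidableEq V] (G : SimpleGraph V) :
    (∃ e : Fin (Fintype.card V) ≃ V, ∀ i : Fin (Fintype.card V),
        (∀ j, j < i → ¬ G.Adj (e i) (e j)) ∨ (∀ j, j < i → G.Adj (e i) (e j))) ↔
    IsThresholdGraph G := by
  constructor
  · rintro ⟨e, he⟩
    exact ⟨no_emb_of_order G e he _ (by decide),
           no_emb_of_order G e he _ (by decide),
           no_emb_of_order G e he _ (by decide)⟩
  · intro hG
    exact build (Fintype.card V) G rfl hG
end

section
/- If G is a comb with the structural decomposition into sets A_0,...,A_n, M_1,...,M_l, X_1,...,X_{n+1}, Y_1=X_1, Y_2,...,Y_{l+2} (as in the structural definition of combs), then the graph G' obtained from G by deleting all edges in E[Y_i, M_i] for 1 ≤ i ≤ l is a threshold graph. -/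
/-- If `G` is a comb with structural decomposition `A₀,…,Aₙ`, `M₁,…,M_l`, `X₁,…,X_{n+1}`,
`Y₁ = X₁, Y₂,…,Y_{l+2}`, then deleting all edges between `Yᵢ` and `Mᵢ` (`1 ≤ i ≤ l`)
yields a threshold graph. -/
theorem comb_minus_matchings_is_threshold {V : Type} [Fintype V] [DecidableEq V]
    (G : SimpleGraph V) (n l k0 : ℕ) (A X M Y : ℕ → Set V)
    (hY1 : Y 1 = X 1)
    -- the index ranges: `A` is defined on `0..n`, `X` on `1..n+1`, `M` on `1..l`,
    -- `Y` on `1..l+2`; outside these ranges the sets are empty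
    (hArange : ∀ i, n < i → A i = ∅)
    (hXrange : ∀ i, i = 0 ∨ n + 1 < i → X i = ∅)
    (hMrange : ∀ i, i = 0 ∨ l < i → M i = ∅)
    (hYrange : ∀ i, i = 0 ∨ l + 2 < i → Y i = ∅)
    -- the sets of the comb are pairwise disjoint (except `Y₁ = X₁`)
    (hAdisj : ∀ i j, i ≠ j → Disjoint (A i) (A j))
    (hXdisj : ∀ i j, i ≠ j → Disjoint (X i) (X j))
    (hMdisj : ∀ i j, i ≠ j → Disjoint (M i) (M j))
    (hYdisj : ∀ i j, i ≠ j → Disjoint (Y i) (Y j))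
    (hAM : ∀ i j, Disjoint (A i) (M j))
    (hXYdisj : ∀ i j, ¬(i = 1 ∧ j = 1) → Disjoint (X i) (Y j))
    (hSK : Disjoint ((⋃ i, A i) ∪ ⋃ i, M i) ((⋃ i, X i) ∪ ⋃ i, Y i))
    -- `V(G) = S ∪ K`
    (hcover : ∀ v : V, v ∈ ((⋃ i, A i) ∪ ⋃ i, M i) ∪ ((⋃ i, X i) ∪ ⋃ i, Y i))
    -- `S = A ∪ M` is stable and `K = X ∪ Y` is a clique
    (hstable : ∀ a ∈ (⋃ i, A i) ∪ ⋃ i, M i, ∀ b ∈ (⋃ i, A i) ∪ ⋃ i, M i, ¬ G.Adj a b)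
    (hclique : ∀ a ∈ (⋃ i, X i) ∪ ⋃ i, Y i, ∀ b ∈ (⋃ i, X i) ∪ ⋃ i, Y i, a ≠ b → G.Adj a b)
    -- `G[Aᵢ ∪ Xⱼ]` is a complete split graph for `1 ≤ j ≤ i ≤ n`
    (hAX : ∀ i j, 1 ≤ j → j ≤ i → i ≤ n → ∀ a ∈ A i, ∀ x ∈ X j, G.Adj a x)
    -- `G[A ∪ Y]` is a complete split graph
    (hAY : ∀ a ∈ ⋃ i, A i, ∀ y ∈ ⋃ i, Y i, G.Adj a y)
    -- `G[Yᵢ ∪ Mᵢ]` is a perfect split graph for `1 ≤ i ≤ l`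
    (hperfect : ∀ i, 1 ≤ i → i ≤ l →
      (∀ m ∈ M i, ∃! y, y ∈ Y i ∧ G.Adj m y) ∧ (∀ y ∈ Y i, ∃! m, m ∈ M i ∧ G.Adj m y))
    -- `G[Yⱼ ∪ Mᵢ]` is a complete split graph for `1 ≤ i < j ≤ l`
    (hMY : ∀ i j, 1 ≤ i → i < j → j ≤ l → ∀ y ∈ Y j, ∀ m ∈ M i, G.Adj y m)
    -- `G[Y_{l+1} ∪ Mᵢ]` is a complete split graph for `i ≤ k₀`
    (hk0 : 1 ≤ k0 ∧ k0 ≤ l ∨ l = 0)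
    (hYl1 : ∀ i, 1 ≤ i → i ≤ k0 → ∀ y ∈ Y (l + 1), ∀ m ∈ M i, G.Adj y m)
    -- the only possibly empty sets are `X_{n+1}`, `Y_{l+2}`, `Y_{l+1}`, `M_l`, `A₀`
    (hAne : ∀ i, 1 ≤ i → i ≤ n → (A i).Nonempty)
    (hXne : ∀ i, 1 ≤ i → i ≤ n → (X i).Nonempty)
    (hMne : ∀ i, 1 ≤ i → i < l → (M i).Nonempty)
    (hYne : ∀ i, 1 ≤ i → i ≤ l → (Y i).Nonempty)
    -- these are all the edges of `G`
    (honly : ∀ a b, G.Adj a b → a ∈ (⋃ i, A i) ∪ ⋃ i, M i →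
      (∃ i j, 1 ≤ j ∧ j ≤ i ∧ i ≤ n ∧ a ∈ A i ∧ b ∈ X j) ∨
      (a ∈ (⋃ i, A i) ∧ b ∈ ⋃ i, Y i) ∨
      (∃ i, 1 ≤ i ∧ i ≤ l ∧ a ∈ M i ∧ b ∈ Y i) ∨
      (∃ i j, 1 ≤ i ∧ i < j ∧ j ≤ l ∧ a ∈ M i ∧ b ∈ Y j) ∨
      (∃ i, 1 ≤ i ∧ i ≤ k0 ∧ a ∈ M i ∧ b ∈ Y (l + 1))) :
    IsThresholdGraph
      (G.deleteEdges {e : Sym2 V | ∃ i, 1 ≤ i ∧ i ≤ l ∧ ∃ y ∈ Y i, ∃ m ∈ M i, e = s(y, m)}) := by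
    classical
  set S : Set V := (⋃ i, A i) ∪ ⋃ i, M i with hSdef
  set K : Set V := (⋃ i, X i) ∪ ⋃ i, Y i with hKdef
  set DS : Set (Sym2 V) :=
    {e : Sym2 V | ∃ i, 1 ≤ i ∧ i ≤ l ∧ ∃ y ∈ Y i, ∃ m ∈ M i, e = s(y, m)} with hDSdef
  set G' : SimpleGraph V := G.deleteEdges DS with hG'def
  have hG'adj : ∀ a b : V, G'.Adj a b ↔ G.Adj a b ∧ s(a, b) ∉ DS := by
    intro a b; rw [hG'def]; exact SimpleGraph.deleteEdges_adj
  have hGsub : ∀ a b : V, G'.Adj a b → G.Adj a b := fun a b h => ((hG'adj a b).mp h).1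
  have hSKmem : ∀ a : V, a ∈ S → a ∈ K → False := fun a ha hk =>
    Set.disjoint_left.mp hSK ha hk
  have hMS : ∀ (i : ℕ) (m : V), m ∈ M i → m ∈ S := fun i m hm =>
    Set.mem_union_right _ (Set.mem_iUnion.mpr ⟨i, hm⟩)
  have hAS : ∀ (a : V), a ∈ (⋃ i, A i) → a ∈ S := fun a ha => Set.mem_union_left _ ha
  have hYK : ∀ (i : ℕ) (y : V), y ∈ Y i → y ∈ K := fun i y hy =>
    Set.mem_union_right _ (Set.mem_iUnion.mpr ⟨i, hy⟩)
  have hstab' : ∀ a ∈ S, ∀ b ∈ S, ¬ G'.Adj a b := fun a ha b hb h =>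
    hstable a ha b hb (hGsub a b h)
  have hKadj : ∀ a ∈ K, ∀ b ∈ K, a ≠ b → G'.Adj a b := by
    intro a ha b hb hab
    rw [hG'adj]
    refine ⟨hclique a ha b hb hab, ?_⟩
    rintro ⟨i, hi1, hil, y, hy, m, hm, he⟩
    rcases Sym2.eq_iff.mp he with ⟨h1, h2⟩ | ⟨h1, h2⟩
    · exact hSKmem b (by rw [h2]; exact hMS i m hm) hb
    · exact hSKmem a (by rw [h1]; exact hMS i m hm) ha
  have hAnotdel : ∀ (i : ℕ) (a : V), a ∈ A i → ∀ b, G.Adj a b → G'.Adj a b := by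
    intro i a ha b hadj
    rw [hG'adj]
    refine ⟨hadj, ?_⟩
    rintro ⟨i', hi1, hil, y, hy, m, hm, he⟩
    rcases Sym2.eq_iff.mp he with ⟨h1, h2⟩ | ⟨h1, h2⟩
    · exact hSKmem a (hAS a (Set.mem_iUnion.mpr ⟨i, ha⟩)) (by rw [h1]; exact hYK i' y hy)
    · exact Set.disjoint_left.mp (hAM i i') ha (by rw [h1]; exact hm)
  have hAallY : ∀ a ∈ ⋃ i, A i, ∀ k ∈ ⋃ i, Y i, G'.Adj a k := by
    intro a ha k hk
    obtain ⟨i, hai⟩ := Set.mem_iUnion.mp ha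
    exact hAnotdel i a hai k (hAY a ha k hk)
  have hMrangeLem : ∀ (i : ℕ) (m : V), m ∈ M i → 1 ≤ i ∧ i ≤ l := by
    intro i m hm
    by_contra h
    have he : M i = ∅ := hMrange i (by omega)
    rw [he] at hm
    exact hm
  have hMadjY : ∀ (i j : ℕ) (m y : V), m ∈ M i → y ∈ Y j →
      ((i < j ∧ j ≤ l) ∨ (j = l + 1 ∧ i ≤ k0)) → G'.Adj m y := by
    intro i j m y hm hy hC
    obtain ⟨hi1, hil⟩ := hMrangeLem i m hm
    have hGadj : G.Adj m y := by
      rcases hC with ⟨hij, hjl⟩ | ⟨hj, hik⟩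
      · exact (hMY i j hi1 hij hjl y hy m hm).symm
      · subst hj; exact (hYl1 i hi1 hik y hy m hm).symm
    rw [hG'adj]
    refine ⟨hGadj, ?_⟩
    rintro ⟨i', hi'1, hi'l, y', hy', m', hm', he⟩
    rcases Sym2.eq_iff.mp he with ⟨h1, h2⟩ | ⟨h1, h2⟩
    · exact hSKmem m (hMS i m hm) (by rw [h1]; exact hYK i' y' hy')
    · have hii : i = i' := by
        by_contra hne
        exact Set.disjoint_left.mp (hMdisj i i' hne) hm (by rw [h1]; exact hm')
      have hjj : j = i' := by
        by_contra hne
        exact Set.disjoint_left.mp (hYdisj j i' hne) hy (by rw [h2]; exact hy')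
      omega
  have hMonlyY : ∀ (i : ℕ) (m k : V), m ∈ M i → G'.Adj m k →
      ∃ j, k ∈ Y j ∧ ((i < j ∧ j ≤ l) ∨ (j = l + 1 ∧ i ≤ k0)) := by
    intro i m k hm hadj
    have hG := hGsub m k hadj
    rcases honly m k hG (hMS i m hm) with
      ⟨i', j, _, _, _, hma, _⟩ | ⟨hma, _⟩ | ⟨i', h1, h2, hmi', hk⟩ |
      ⟨i', j, h1, h2, h3, hmi', hk⟩ | ⟨i', h1, h2, hmi', hk⟩
    · exact absurd hm (Set.disjoint_left.mp (hAM i' i) hma)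
    · obtain ⟨i', hma'⟩ := Set.mem_iUnion.mp hma
      exact absurd hm (Set.disjoint_left.mp (hAM i' i) hma')
    · exact absurd (⟨i', h1, h2, k, hk, m, hmi', Sym2.eq_swap⟩ : s(m, k) ∈ DS)
        ((hG'adj m k).mp hadj).2
    · have hii : i = i' := by
        by_contra hne
        exact Set.disjoint_left.mp (hMdisj i i' hne) hm hmi'
      exact ⟨j, hk, Or.inl ⟨by omega, h3⟩⟩
    · have hii : i = i' := by
        by_contra hne
        exact Set.disjoint_left.mp (hMdisj i i' hne) hm hmi'
      exact ⟨l + 1, hk, Or.inr ⟨rfl, by omega⟩⟩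
  have hAcase : ∀ s ∈ ⋃ i, A i, ∀ k : V, G'.Adj s k → k ∉ ⋃ i, Y i →
      ∃ i j, 1 ≤ j ∧ j ≤ i ∧ i ≤ n ∧ s ∈ A i ∧ k ∈ X j := by
    intro s hs k hadj hknY
    rcases honly s k (hGsub s k hadj) (hAS s hs) with
      h | ⟨_, hkY⟩ | ⟨_, _, _, _, hkY⟩ | ⟨_, _, _, _, _, _, hkY⟩ | ⟨_, _, _, _, hkY⟩
    · exact h
    · exact absurd hkY hknY
    · exact absurd (Set.mem_iUnion.mpr ⟨_, hkY⟩) hknY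
    · exact absurd (Set.mem_iUnion.mpr ⟨_, hkY⟩) hknY
    · exact absurd (Set.mem_iUnion.mpr ⟨_, hkY⟩) hknY
  have hnest : ∀ s1 ∈ S, ∀ s2 ∈ S, ∀ k1 ∈ K, ∀ k2 ∈ K,
      G'.Adj s1 k1 → G'.Adj s2 k2 → ¬ G'.Adj s1 k2 → ¬ G'.Adj s2 k1 → False := by
    intro s1 hs1 s2 hs2 k1 hk1 k2 hk2 a1 a2 n12 n21
    rcases hs1 with hs1A | hs1M <;> rcases hs2 with hs2A | hs2M
    · -- both in A
      have hk2nY : k2 ∉ ⋃ i, Y i := fun h => n12 (hAallY s1 hs1A k2 h)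
      have hk1nY : k1 ∉ ⋃ i, Y i := fun h => n21 (hAallY s2 hs2A k1 h)
      obtain ⟨i1, j1, hj1, hj1i1, hi1n, hs1i, hk1j⟩ := hAcase s1 hs1A k1 a1 hk1nY
      obtain ⟨i2, j2, hj2, hj2i2, hi2n, hs2i, hk2j⟩ := hAcase s2 hs2A k2 a2 hk2nY
      have h1 : ¬ (j2 ≤ i1) := fun h =>
        n12 (hAnotdel i1 s1 hs1i k2 (hAX i1 j2 hj2 h hi1n s1 hs1i k2 hk2j))
      have h2 : ¬ (j1 ≤ i2) := fun h =>
        n21 (hAnotdel i2 s2 hs2i k1 (hAX i2 j1 hj1 h hi2n s2 hs2i k1 hk1j))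
      omega
    · -- s1 ∈ A, s2 ∈ M
      obtain ⟨i2, hm2⟩ := Set.mem_iUnion.mp hs2M
      obtain ⟨j2, hk2Y, _⟩ := hMonlyY i2 s2 k2 hm2 a2
      exact n12 (hAallY s1 hs1A k2 (Set.mem_iUnion.mpr ⟨j2, hk2Y⟩))
    · -- s1 ∈ M, s2 ∈ A
      obtain ⟨i1, hm1⟩ := Set.mem_iUnion.mp hs1M
      obtain ⟨j1, hk1Y, _⟩ := hMonlyY i1 s1 k1 hm1 a1
      exact n21 (hAallY s2 hs2A k1 (Set.mem_iUnion.mpr ⟨j1, hk1Y⟩))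
    · -- both in M
      obtain ⟨i1, hm1⟩ := Set.mem_iUnion.mp hs1M
      obtain ⟨i2, hm2⟩ := Set.mem_iUnion.mp hs2M
      obtain ⟨j1, hk1Y, hC1⟩ := hMonlyY i1 s1 k1 hm1 a1
      obtain ⟨j2, hk2Y, hC2⟩ := hMonlyY i2 s2 k2 hm2 a2
      have nn1 : ¬ ((i1 < j2 ∧ j2 ≤ l) ∨ (j2 = l + 1 ∧ i1 ≤ k0)) :=
        fun h => n12 (hMadjY i1 j2 s1 k2 hm1 hk2Y h)
      have nn2 : ¬ ((i2 < j1 ∧ j1 ≤ l) ∨ (j1 = l + 1 ∧ i2 ≤ k0)) :=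
        fun h => n21 (hMadjY i2 j1 s2 k1 hm2 hk1Y h)
      omega
  have memSK : ∀ v : V, v ∈ S ∨ v ∈ K := fun v => hcover v
  unfold IsThresholdGraph
  refine ⟨⟨fun f => ?_⟩, ⟨fun f => ?_⟩, ⟨fun f => ?_⟩⟩
  · -- no C4
    have e01 : G'.Adj (f 0) (f 1) := f.map_adj_iff.mpr
      (by unfold cycleGraph; rw [SimpleGraph.fromRel_adj]; decide)
    have e12 : G'.Adj (f 1) (f 2) := f.map_adj_iff.mpr
      (by unfold cycleGraph; rw [SimpleGraph.fromRel_adj]; decide)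
    have e23 : G'.Adj (f 2) (f 3) := f.map_adj_iff.mpr
      (by unfold cycleGraph; rw [SimpleGraph.fromRel_adj]; decide)
    have e30 : G'.Adj (f 3) (f 0) := f.map_adj_iff.mpr
      (by unfold cycleGraph; rw [SimpleGraph.fromRel_adj]; decide)
    have n02 : ¬ G'.Adj (f 0) (f 2) := fun h =>
      (by unfold cycleGraph; rw [SimpleGraph.fromRel_adj]; decide :
        ¬ (cycleGraph 4).Adj 0 2) (f.map_adj_iff.mp h)
    have n13 : ¬ G'.Adj (f 1) (f 3) := fun h =>
      (by unfold cycleGraph; rw [SimpleGraph.fromRel_adj]; decide :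
        ¬ (cycleGraph 4).Adj 1 3) (f.map_adj_iff.mp h)
    have ne13 : f 1 ≠ f 3 := fun h => (by decide : (1 : Fin 4) ≠ 3) (f.injective h)
    have ne02 : f 0 ≠ f 2 := fun h => (by decide : (0 : Fin 4) ≠ 2) (f.injective h)
    rcases memSK (f 0) with h0 | h0
    · rcases memSK (f 1) with h1 | h1
      · exact hstab' _ h0 _ h1 e01
      · rcases memSK (f 3) with h3 | h3
        · exact hstab' _ h3 _ h0 e30
        · exact n13 (hKadj _ h1 _ h3 ne13)
    · rcases memSK (f 2) with h2 | h2
      · rcases memSK (f 1) with h1 | h1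
        · exact hstab' _ h1 _ h2 e12
        · rcases memSK (f 3) with h3 | h3
          · exact hstab' _ h2 _ h3 e23
          · exact n13 (hKadj _ h1 _ h3 ne13)
      · exact n02 (hKadj _ h0 _ h2 ne02)
  · -- no co-C4
    have e02 : G'.Adj (f 0) (f 2) := f.map_adj_iff.mpr
      (by rw [SimpleGraph.compl_adj]; unfold cycleGraph; rw [SimpleGraph.fromRel_adj]; decide)
    have e13 : G'.Adj (f 1) (f 3) := f.map_adj_iff.mpr
      (by rw [SimpleGraph.compl_adj]; unfold cycleGraph; rw [SimpleGraph.fromRel_adj]; decide)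
    have n01 : ¬ G'.Adj (f 0) (f 1) := fun h =>
      (by rw [SimpleGraph.compl_adj]; unfold cycleGraph; rw [SimpleGraph.fromRel_adj]; decide :
        ¬ (cycleGraph 4)ᶜ.Adj 0 1) (f.map_adj_iff.mp h)
    have n12 : ¬ G'.Adj (f 1) (f 2) := fun h =>
      (by rw [SimpleGraph.compl_adj]; unfold cycleGraph; rw [SimpleGraph.fromRel_adj]; decide :
        ¬ (cycleGraph 4)ᶜ.Adj 1 2) (f.map_adj_iff.mp h)
    have n23 : ¬ G'.Adj (f 2) (f 3) := fun h =>
      (by rw [SimpleGraph.compl_adj]; unfold cycleGraph; rw [SimpleGraph.fromRel_adj]; decide :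
        ¬ (cycleGraph 4)ᶜ.Adj 2 3) (f.map_adj_iff.mp h)
    have n30 : ¬ G'.Adj (f 3) (f 0) := fun h =>
      (by rw [SimpleGraph.compl_adj]; unfold cycleGraph; rw [SimpleGraph.fromRel_adj]; decide :
        ¬ (cycleGraph 4)ᶜ.Adj 3 0) (f.map_adj_iff.mp h)
    have ne23 : f 2 ≠ f 3 := fun h => (by decide : (2 : Fin 4) ≠ 3) (f.injective h)
    have ne12 : f 1 ≠ f 2 := fun h => (by decide : (1 : Fin 4) ≠ 2) (f.injective h)
    have ne30 : f 3 ≠ f 0 := fun h => (by decide : (3 : Fin 4) ≠ 0) (f.injective h)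
    have ne01 : f 0 ≠ f 1 := fun h => (by decide : (0 : Fin 4) ≠ 1) (f.injective h)
    rcases memSK (f 0) with h0 | h0
    · rcases memSK (f 2) with h2 | h2
      · exact hstab' _ h0 _ h2 e02
      · rcases memSK (f 1) with h1 | h1
        · rcases memSK (f 3) with h3 | h3
          · exact hstab' _ h1 _ h3 e13
          · exact n23 (hKadj _ h2 _ h3 ne23)
        · exact n12 (hKadj _ h1 _ h2 ne12)
    · rcases memSK (f 1) with h1 | h1
      · rcases memSK (f 3) with h3 | h3
        · exact hstab' _ h1 _ h3 e13
        · exact n30 (hKadj _ h3 _ h0 ne30)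
      · exact n01 (hKadj _ h0 _ h1 ne01)
  · -- no P4
    have e01 : G'.Adj (f 0) (f 1) := f.map_adj_iff.mpr
      (by rw [SimpleGraph.pathGraph_adj]; decide)
    have e12 : G'.Adj (f 1) (f 2) := f.map_adj_iff.mpr
      (by rw [SimpleGraph.pathGraph_adj]; decide)
    have e23 : G'.Adj (f 2) (f 3) := f.map_adj_iff.mpr
      (by rw [SimpleGraph.pathGraph_adj]; decide)
    have n02 : ¬ G'.Adj (f 0) (f 2) := fun h =>
      (by rw [SimpleGraph.pathGraph_adj]; decide :
        ¬ (SimpleGraph.pathGraph 4).Adj 0 2) (f.map_adj_iff.mp h)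
    have n13 : ¬ G'.Adj (f 1) (f 3) := fun h =>
      (by rw [SimpleGraph.pathGraph_adj]; decide :
        ¬ (SimpleGraph.pathGraph 4).Adj 1 3) (f.map_adj_iff.mp h)
    have n03 : ¬ G'.Adj (f 0) (f 3) := fun h =>
      (by rw [SimpleGraph.pathGraph_adj]; decide :
        ¬ (SimpleGraph.pathGraph 4).Adj 0 3) (f.map_adj_iff.mp h)
    have ne02 : f 0 ≠ f 2 := fun h => (by decide : (0 : Fin 4) ≠ 2) (f.injective h)
    have ne03 : f 0 ≠ f 3 := fun h => (by decide : (0 : Fin 4) ≠ 3) (f.injective h)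
    have ne13 : f 1 ≠ f 3 := fun h => (by decide : (1 : Fin 4) ≠ 3) (f.injective h)
    rcases memSK (f 0) with h0 | h0
    · rcases memSK (f 3) with h3 | h3
      · rcases memSK (f 1) with h1 | h1
        · exact hstab' _ h0 _ h1 e01
        · rcases memSK (f 2) with h2 | h2
          · exact hstab' _ h2 _ h3 e23
          · exact hnest (f 0) h0 (f 3) h3 (f 1) h1 (f 2) h2 e01 e23.symm n02
              (fun h => n13 h.symm)
      · rcases memSK (f 1) with h1 | h1
        · exact hstab' _ h0 _ h1 e01
        · exact n13 (hKadj _ h1 _ h3 ne13)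
    · rcases memSK (f 2) with h2 | h2
      · rcases memSK (f 3) with h3 | h3
        · exact hstab' _ h2 _ h3 e23
        · exact n03 (hKadj _ h0 _ h3 ne03)
      · exact n02 (hKadj _ h0 _ h2 ne02)
end

section
/- Every feed vertex of a tournament has the second neighborhood property: if f is the last vertex of a local median order of a tournament T, then |N^+(f)| ≤ |N^{++}(f)|. -/
set_option maxRecDepth 10000


open scoped Classical

variable {V : Type*}

/-- The first out-neighborhood of `v`. -/
def NPlus (E : V → V → Prop) (v : V) : Set V := {y | E v y}

/-- The second out-neighborhood of `v`: vertices at directed distance exactly 2 from `v`. -/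
def NPlusPlus (E : V → V → Prop) (v : V) : Set V :=
  {y | y ≠ v ∧ ¬ E v y ∧ ∃ z, E v z ∧ E z y}

/-- Half-open window of indices. -/
noncomputable def win {n : ℕ} (i j : Fin n) : Finset (Fin n) :=
  Finset.univ.filter fun k : Fin n => i ≤ k ∧ k < j

lemma mem_win {n : ℕ} {i j k : Fin n} : k ∈ win i j ↔ i.val ≤ k.val ∧ k.val < j.val := by
  simp only [win, Finset.mem_filter, Finset.mem_univ, true_and, Fin.le_def, Fin.lt_def]

lemma win_eq_union {n : ℕ} {i k j : Fin n} (h1 : i ≤ k) (h2 : k ≤ j) :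
    win i j = win i k ∪ win k j := by
  rw [Fin.le_def] at h1 h2
  ext x
  simp only [mem_win, Finset.mem_union]
  omega

lemma win_disjoint {n : ℕ} (i k j : Fin n) : Disjoint (win i k) (win k j) := by
  rw [Finset.disjoint_left]
  intro x hx hx'
  rw [mem_win] at hx hx'
  omega

/-- Filtered-degree conversion: counting within the closed interval equals counting indices
in the half-open window, provided the predicate fails at the right endpoint. -/
lemma card_interval_filter {n : ℕ} [DecidableEq V] (L : Fin n ≃ V) (i j : Fin n)
    (p : V → Prop) (hpj : ¬ p (L j)) :
    ((interval (⇑L) i j).filter p).card = ((win i j).filter fun k => p (L k)).card := by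
  classical
  apply Finset.card_bij (fun (y : V) _ => L.symm y)
  · intro y hy
    rw [Finset.mem_filter] at hy
    obtain ⟨hy1, hy2⟩ := hy
    rw [interval, Finset.mem_image] at hy1
    obtain ⟨k, hk, hky⟩ := hy1
    rw [Finset.mem_filter] at hk
    have hkj : k ≠ j := by
      rintro rfl; exact hpj (hky ▸ hy2)
    have hkj' : k < j := lt_of_le_of_ne hk.2.2 hkj
    rw [Finset.mem_filter, mem_win]
    subst hky
    simp only [Equiv.symm_apply_apply]
    refine ⟨⟨Fin.le_def.mp hk.2.1, Fin.lt_def.mp hkj'⟩, hy2⟩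
  · intro y1 h1 y2 h2 h
    have := congrArg L h
    simpa using this
  · intro k hk
    rw [Finset.mem_filter, mem_win] at hk
    refine ⟨L k, ?_, by simp⟩
    rw [Finset.mem_filter]
    constructor
    · rw [interval, Finset.mem_image]
      refine ⟨k, ?_, rfl⟩
      simp only [Finset.mem_filter, Finset.mem_univ, true_and, Fin.le_def, Fin.lt_def]
      omega
    · exact hk.2

lemma card_univ_filter {n : ℕ} [Fintype V] [DecidableEq V] (L : Fin n ≃ V)
    (i0 lastI : Fin n) (hi0 : ∀ k : Fin n, i0 ≤ k) (hlastI : ∀ k : Fin n, k ≤ lastI)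
    (p : V → Prop) (hp : ¬ p (L lastI)) :
    (Finset.univ.filter p).card = ((win i0 lastI).filter fun k => p (L k)).card := by
  classical
  apply Finset.card_bij (fun (y : V) _ => L.symm y)
  · intro y hy
    rw [Finset.mem_filter] at hy
    rw [Finset.mem_filter, mem_win]
    have hne : L.symm y ≠ lastI := by
      rintro h
      apply hp
      have : L (L.symm y) = y := by simp
      rw [h] at this
      rw [this]; exact hy.2
    have h1 := Fin.le_def.mp (hi0 (L.symm y))
    have h2 := Fin.le_def.mp (hlastI (L.symm y))
    have h3 : (L.symm y).val ≠ lastI.val := fun h => hne (Fin.ext h)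
    refine ⟨⟨h1, by omega⟩, by simp [hy.2]⟩
  · intro y1 h1 y2 h2 h
    have := congrArg L h
    simpa using this
  · intro k hk
    rw [Finset.mem_filter] at hk
    exact ⟨L k, by simp [hk.2], by simp⟩

/-- Key lemma: for any index `j` whose vertex is the feed vertex or a "bad" in-neighbor
(an in-neighbor of the feed vertex which is not a second out-neighbor), every half-open
window `[i, j)` contains at least as many second out-neighbors as out-neighbors. -/
lemma key_lemma [Fintype V] [DecidableEq V] {n : ℕ}
    (E : V → V → Prop) (hirr : ∀ x, ¬ E x x)
    (htot : ∀ x y, x ≠ y → (E x y ↔ ¬ E y x))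
    (L : Fin n ≃ V) (hL : Feedback E ⇑L) (lastI : Fin n) (hlastI : ∀ k : Fin n, k ≤ lastI) :
    ∀ m : ℕ, ∀ i j : Fin n, 2 * j.val - i.val ≤ m →
      (L j = L lastI ∨ (E (L j) (L lastI) ∧ L j ∉ NPlusPlus E (L lastI))) →
      ((win i j).filter fun k => E (L lastI) (L k)).card ≤
      ((win i j).filter fun k => L k ∈ NPlusPlus E (L lastI)).card := by
  classical
  intro m
  induction m with
  | zero =>
    intro i j hm hj
    have hw : win i j = ∅ := by
      ext x; simp only [mem_win, Finset.notMem_empty, iff_false, not_and, not_lt]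
      omega
    simp [hw]
  | succ m ih =>
    intro i j hm hj
    by_cases hij : j.val ≤ i.val
    · have hw : win i j = ∅ := by
        ext x; simp only [mem_win, Finset.notMem_empty, iff_false, not_and, not_lt]
        omega
      simp [hw]
    · push_neg at hij
      have hijF : i < j := Fin.lt_def.mpr hij
      by_cases hbad : ∃ k ∈ win i j, E (L k) (L lastI) ∧ L k ∉ NPlusPlus E (L lastI)
      · obtain ⟨k, hkmem, hkB⟩ := hbad
        have hik := mem_win.mp hkmem
        rcases eq_or_lt_of_le hik.1 with heq | hlt
        · -- k is the first vertex of the window: drop it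
          have hkival : i = k := Fin.ext heq
          subst hkival
          have hi1 : i.val + 1 < n := by have := j.isLt; omega
          set i' : Fin n := ⟨i.val + 1, hi1⟩ with hi'def
          have hwin : win i j = insert i (win i' j) := by
            ext x
            simp only [mem_win, Finset.mem_insert, Fin.ext_iff, hi'def]
            omega
          have hnotmem : i ∉ win i' j := by
            rw [mem_win]; simp [hi'def]
          have hfi : L lastI ≠ L i := by
            intro h
            exact hirr (L lastI) (h ▸ hkB.1)
          have hiA : ¬ E (L lastI) (L i) := by
            intro h
            exact (htot (L lastI) (L i) hfi).mp h hkB.1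
          rw [hwin, Finset.filter_insert, Finset.filter_insert, if_neg hiA, if_neg hkB.2]
          exact ih i' j (by simp [hi'def]; omega) hj
        · -- a bad vertex strictly inside the window: split there
          have hsplit := win_eq_union (le_of_lt (Fin.lt_def.mpr hlt))
            (le_of_lt (Fin.lt_def.mpr hik.2))
          have hdisj := win_disjoint i k j
          rw [hsplit, Finset.filter_union, Finset.filter_union,
            Finset.card_union_of_disjoint
              (hdisj.mono (Finset.filter_subset _ _) (Finset.filter_subset _ _)),
            Finset.card_union_of_disjoint
              (hdisj.mono (Finset.filter_subset _ _) (Finset.filter_subset _ _))]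
          have h1 := ih i k (by omega) (Or.inr hkB)
          have h2 := ih k j (by omega) hj
          omega
      · -- no bad vertex in the window: direct counting via the feedback property
        push_neg at hbad
        have hfb := (hL i j (le_of_lt hijF)).2
        have hO : outDegOn E (interval (⇑L) i j) (L j)
            = ((win i j).filter fun k => E (L j) (L k)).card :=
          card_interval_filter L i j (fun y => E (L j) y) (hirr (L j))
        have hI : inDegOn E (interval (⇑L) i j) (L j)
            = ((win i j).filter fun k => E (L k) (L j)).card :=
          card_interval_filter L i j (fun y => E y (L j)) (hirr (L j))
        rw [hO, hI] at hfb
        -- window vertices are distinct from L j and from the feed vertex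
        have hne_j : ∀ k ∈ win i j, L k ≠ L j := by
          intro k hk h
          have := L.injective h
          have hk' := mem_win.mp hk
          rw [this] at hk'
          omega
        have hne_f : ∀ k ∈ win i j, L k ≠ L lastI := by
          intro k hk h
          have := L.injective h
          have hk' := mem_win.mp hk
          have hjlast := Fin.le_def.mp (hlastI j)
          rw [this] at hk'
          omega
        -- in-degree of L j equals the complement count
        have hIeq : ((win i j).filter fun k => E (L k) (L j)).card
            = ((win i j).filter fun k => ¬ E (L j) (L k)).card := by
          apply congrArg
          apply Finset.filter_congr
          intro k hk
          constructor
          · intro h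
            exact fun h' => (htot (L k) (L j) (hne_j k hk)).mp h h'
          · intro h
            exact (htot (L k) (L j) (hne_j k hk)).mpr h
        have hsum := Finset.card_filter_add_card_filter_not
          (s := win i j) (p := fun k => E (L j) (L k))
        -- the out-neighbors of the feed vertex in the window are dominated by L j
        have hAO : ((win i j).filter fun k => E (L lastI) (L k)).card
            ≤ ((win i j).filter fun k => E (L j) (L k)).card := by
          apply Finset.card_le_card
          intro k hk
          rw [Finset.mem_filter] at hk ⊢
          refine ⟨hk.1, ?_⟩
          rcases hj with hj | hj
          · rw [hj]; exact hk.2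
          · by_contra h
            have hEkj : E (L k) (L j) := (htot (L k) (L j) (hne_j k hk.1)).mpr h
            have hjne : L j ≠ L lastI := by
              intro hh
              exact hirr (L lastI) (hh ▸ hj.1)
            have : L j ∈ NPlusPlus E (L lastI) := by
              refine ⟨hjne, ?_, ⟨L k, hk.2, hEkj⟩⟩
              exact fun hh => (htot (L j) (L lastI) hjne).mp hj.1 hh
            exact hj.2 this
        -- the window splits into out-neighbors and second out-neighbors of the feed vertex
        have hpart : ((win i j).filter fun k => E (L lastI) (L k)).card
            + ((win i j).filter fun k => L k ∈ NPlusPlus E (L lastI)).card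
            = (win i j).card := by
          have h0 := Finset.card_filter_add_card_filter_not
            (s := win i j) (p := fun k => E (L lastI) (L k))
          have heq : ((win i j).filter fun k => ¬ E (L lastI) (L k))
              = ((win i j).filter fun k => L k ∈ NPlusPlus E (L lastI)) := by
            apply Finset.filter_congr
            intro k hk
            constructor
            · intro h
              have hEkf : E (L k) (L lastI) := (htot (L k) (L lastI) (hne_f k hk)).mpr h
              exact hbad k hk hEkf
            · intro h
              exact h.2.1
          rw [heq] at h0
          exact h0
        -- the total window count also splits by orientation towards L j
        omega

/-- Every feed vertex of a tournament has the second neighborhood property. -/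
theorem feed_vertex_of_tournament_has_SNP [Fintype V] [DecidableEq V]
    (E : V → V → Prop)
    (htour : (∀ x, ¬ E x x) ∧ ∀ x y, x ≠ y → (E x y ↔ ¬ E y x))
    (hpos : 0 < Fintype.card V)
    (L : Fin (Fintype.card V) ≃ V) (hL : Feedback E ⇑L) :
    (NPlus E (L ⟨Fintype.card V - 1, Nat.sub_lt hpos Nat.one_pos⟩)).ncard ≤
      (NPlusPlus E (L ⟨Fintype.card V - 1, Nat.sub_lt hpos Nat.one_pos⟩)).ncard := by
  classical
  set lastI : Fin (Fintype.card V) := ⟨Fintype.card V - 1, Nat.sub_lt hpos Nat.one_pos⟩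
    with hlastdef
  set i0 : Fin (Fintype.card V) := ⟨0, hpos⟩ with hi0def
  have hlastI : ∀ k : Fin (Fintype.card V), k ≤ lastI := by
    intro k
    rw [Fin.le_def]
    have := k.isLt
    simp only [hlastdef]
    omega
  have hi0 : ∀ k : Fin (Fintype.card V), i0 ≤ k := by
    intro k
    rw [Fin.le_def]
    simp only [hi0def]
    omega
  have key := key_lemma E htour.1 htour.2 L hL lastI hlastI (2 * lastI.val) i0 lastI
    (by omega) (Or.inl rfl)
  have h1 : NPlus E (L lastI) = ↑(Finset.univ.filter fun y => E (L lastI) y) := by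
    ext y; simp [NPlus]
  have h2 : NPlusPlus E (L lastI)
      = ↑(Finset.univ.filter fun y => y ∈ NPlusPlus E (L lastI)) := by
    ext y; simp
  rw [h1, h2, Set.ncard_coe_finset, Set.ncard_coe_finset]
  rw [card_univ_filter L i0 lastI hi0 hlastI (fun y => E (L lastI) y) (htour.1 (L lastI)),
    card_univ_filter L i0 lastI hi0 hlastI (fun y => y ∈ NPlusPlus E (L lastI))
      (fun h => h.1 rfl)]
  exact key
end
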